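/- Let p ∈ (0,1), x ∈ ℤ, and let η be a discrete Laplace random variable with P(η = i) = ((1-p)/(1+p))·p^{|i|} for i ∈ ℤ. Let x̃ = x + η. If E[|f(x̃)|] is finite for f : ℤ → ℝ, then the estimator g(y) = f(y) - (p/(1-p)²)·(f(y+1) - 2f(y) + f(y-1)) satisfies E[g(x̃)] = f(x). -/
import Mathlib


open scoped BigOperators
set_option maxHeartbeats 1000000

/-- Debiasing the univariate discrete Laplace mechanism: if `x̃ = x + η` with
`η ∼ DLap(p)` and `E[|f(x̃)|] < ∞`, then
`g(y) = f(y) - p/(1-p)² (f(y+1) - 2f(y) + f(y-1))` satisfies `E[g(x̃)] = f(x)`. -/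
theorem discrete_laplace_unbiased_univariate
    (p : ℝ) (hp0 : 0 < p) (hp1 : p < 1) (x : ℤ) (f : ℤ → ℝ)
    (hsum : Summable fun i : ℤ => (1 - p) / (1 + p) * p ^ |i| * |f (x + i)|) :
    (∑' i : ℤ, (1 - p) / (1 + p) * p ^ |i| *
        (f (x + i) - p / (1 - p) ^ 2 *
          (f (x + i + 1) - 2 * f (x + i) + f (x + i - 1)))) = f x := by
  set K : ℝ := (1 - p) / (1 + p) with hK
  set c : ℝ := p / (1 - p) ^ 2 with hc
  have hpne : p ≠ 0 := hp0.ne'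
  have hKpos : 0 < K := div_pos (by linarith) (by linarith)
  set w : ℤ → ℝ := fun i => K * p ^ |i| with hw
  have hwpos : ∀ i, 0 < w i := fun i => mul_pos hKpos (zpow_pos hp0 _)
  -- shifted summability of the absolute series
  have hshift : ∀ k : ℤ, Summable fun i : ℤ => w (i + k) * |f (x + (i + k))| :=
    fun k => (Equiv.addRight k).summable_iff.mpr hsum
  -- `w i ≤ w (i+k) / p^|k|`-type bounds; we only need k = ±1
  have hwle : ∀ (k i : ℤ), |k| = 1 → w i ≤ p⁻¹ * w (i + k) := by
    intro k i hk
    have h1 : |i| ≥ |i + k| - 1 := by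
      have := abs_sub_abs_le_abs_sub (i + k) i
      simp [hk] at this ⊢
      omega
    have h2 : p ^ |i| ≤ p ^ (|i + k| - 1) :=
      zpow_le_zpow_right_of_le_one₀ hp0 hp1.le (by omega)
    have h3 : p ^ (|i + k| - 1) = p⁻¹ * p ^ |i + k| := by
      rw [zpow_sub₀ hpne, zpow_one]; ring
    calc w i = K * p ^ |i| := rfl
      _ ≤ K * (p⁻¹ * p ^ |i + k|) := by
          rw [← h3]; exact mul_le_mul_of_nonneg_left h2 hKpos.le
      _ = p⁻¹ * w (i + k) := by ring
  -- summability of the three pieces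
  have hA : Summable fun i : ℤ => w i * f (x + i) := by
    apply Summable.of_abs
    have : (fun i : ℤ => |w i * f (x + i)|) = fun i => w i * |f (x + i)| := by
      funext i; rw [abs_mul, abs_of_pos (hwpos i)]
    rw [this]; exact hsum
  have habs : ∀ (k : ℤ), |k| = 1 → Summable fun i : ℤ => w i * f (x + i + k) := by
    intro k hk
    apply Summable.of_abs
    have hbound : ∀ i : ℤ, |w i * f (x + i + k)| ≤ p⁻¹ * (w (i + k) * |f (x + (i + k))|) := by
      intro i
      rw [abs_mul, abs_of_pos (hwpos i)]
      have hx : x + i + k = x + (i + k) := by ring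
      rw [hx]
      exact (mul_le_mul_of_nonneg_right (hwle k i hk) (abs_nonneg _)).trans_eq (by ring)
    exact Summable.of_nonneg_of_le (fun i => abs_nonneg _) hbound ((hshift k).mul_left _)
  have hB : Summable fun i : ℤ => w i * f (x + i + 1) := habs 1 (by norm_num)
  have hC : Summable fun i : ℤ => w i * f (x + i - 1) := by
    have := habs (-1) (by norm_num)
    simpa [sub_eq_add_neg] using this
  -- reindexed versions
  have hcompB : ((fun i : ℤ => w (i - 1) * f (x + i)) ∘ (Equiv.addRight (1 : ℤ)))
      = fun i : ℤ => w i * f (x + i + 1) := by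
    funext i
    simp only [Function.comp_apply, Equiv.coe_addRight, add_sub_cancel_right, add_assoc]
  have hcompC : ((fun i : ℤ => w (i + 1) * f (x + i)) ∘ (Equiv.addRight (-1 : ℤ)))
      = fun i : ℤ => w i * f (x + i - 1) := by
    funext i
    simp only [Function.comp_apply, Equiv.coe_addRight]
    rw [show i + -1 + 1 = i by ring, show x + (i + -1) = x + i - 1 by ring]
  have hB' : Summable fun i : ℤ => w (i - 1) * f (x + i) := by
    apply (Equiv.addRight (1 : ℤ)).summable_iff.mp
    rw [hcompB]; exact hB
  have hC' : Summable fun i : ℤ => w (i + 1) * f (x + i) := by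
    apply (Equiv.addRight (-1 : ℤ)).summable_iff.mp
    rw [hcompC]; exact hC
  have htB : (∑' i : ℤ, w i * f (x + i + 1)) = ∑' i : ℤ, w (i - 1) * f (x + i) := by
    conv_rhs => rw [← (Equiv.addRight (1 : ℤ)).tsum_eq (fun i : ℤ => w (i - 1) * f (x + i))]
    exact tsum_congr fun i => (congrFun hcompB i).symm
  have htC : (∑' i : ℤ, w i * f (x + i - 1)) = ∑' i : ℤ, w (i + 1) * f (x + i) := by
    conv_rhs => rw [← (Equiv.addRight (-1 : ℤ)).tsum_eq (fun i : ℤ => w (i + 1) * f (x + i))]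
    exact tsum_congr fun i => (congrFun hcompC i).symm
  -- rewrite the summand
  have hsummand : ∀ i : ℤ,
      K * p ^ |i| * (f (x + i) - c * (f (x + i + 1) - 2 * f (x + i) + f (x + i - 1)))
      = (1 + 2 * c) * (w i * f (x + i)) - c * (w i * f (x + i + 1))
        - c * (w i * f (x + i - 1)) := by
    intro i; simp only [hw]; ring
  calc (∑' i : ℤ, K * p ^ |i| *
        (f (x + i) - c * (f (x + i + 1) - 2 * f (x + i) + f (x + i - 1))))
      = ∑' i : ℤ, ((1 + 2 * c) * (w i * f (x + i)) - c * (w i * f (x + i + 1))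
          - c * (w i * f (x + i - 1))) := by
        exact tsum_congr hsummand
    _ = (1 + 2 * c) * (∑' i : ℤ, w i * f (x + i)) - c * (∑' i : ℤ, w i * f (x + i + 1))
          - c * (∑' i : ℤ, w i * f (x + i - 1)) := by
        rw [Summable.tsum_sub (((hA.mul_left _).sub (hB.mul_left _))) (hC.mul_left _),
          Summable.tsum_sub (hA.mul_left _) (hB.mul_left _), tsum_mul_left, tsum_mul_left,
          tsum_mul_left]
    _ = ∑' i : ℤ, ((1 + 2 * c) * (w i * f (x + i)) - c * (w (i - 1) * f (x + i))
          - c * (w (i + 1) * f (x + i))) := by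
        rw [htB, htC,
          Summable.tsum_sub (((hA.mul_left _).sub (hB'.mul_left _))) (hC'.mul_left _),
          Summable.tsum_sub (hA.mul_left _) (hB'.mul_left _), tsum_mul_left, tsum_mul_left,
          tsum_mul_left]
    _ = f x := by
        rw [tsum_eq_single 0 ?_]
        · have hw0 : w 0 = K := by simp [hw]
          have hw1 : w 1 = K * p := by norm_num [hw]
          have hwm1 : w (-1) = K * p := by norm_num [hw]
          rw [show (0:ℤ) - 1 = -1 by ring, show (0:ℤ) + 1 = 1 by ring, hw0, hw1, hwm1]
          have : (1 + 2 * c) * (K * f (x + 0)) - c * (K * p * f (x + 0))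
              - c * (K * p * f (x + 0)) = ((1 + 2 * c) * K - 2 * c * K * p) * f (x + 0) := by
            ring
          rw [this, show x + (0:ℤ) = x by ring]
          have hcoef : (1 + 2 * c) * K - 2 * c * K * p = 1 := by
            have h1 : (1 : ℝ) - p ≠ 0 := by linarith
            have h2 : (1 : ℝ) + p ≠ 0 := by linarith
            rw [hc, hK]; field_simp; ring
          rw [hcoef, one_mul]
        · intro i hi
          have hcoef : (1 + 2 * c) * w i - c * w (i - 1) - c * w (i + 1) = 0 := by
            have key : p ^ |i - 1| + p ^ |i + 1| = p ^ (|i| - 1) * (1 + p ^ 2) := by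
              rcases lt_or_gt_of_ne hi with h | h
              · have e1 : |i - 1| = |i| + 1 := by
                  rw [abs_of_neg h, abs_of_neg (by linarith : i - 1 < 0)]; ring
                have e2 : |i + 1| = |i| - 1 := by
                  rw [abs_of_neg h, abs_of_nonpos (by omega : i + 1 ≤ 0)]; ring
                rw [e1, e2, zpow_add₀ hpne, zpow_sub₀ hpne]
                field_simp; ring
              · have e1 : |i - 1| = |i| - 1 := by
                  rw [abs_of_pos h, abs_of_nonneg (by omega : (0:ℤ) ≤ i - 1)]
                have e2 : |i + 1| = |i| + 1 := by
                  rw [abs_of_pos h, abs_of_pos (by omega : (0:ℤ) < i + 1)]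
                rw [e1, e2, zpow_add₀ hpne, zpow_sub₀ hpne]
                field_simp
            have hwi : p ^ |i| = p ^ (|i| - 1) * p := by
              rw [zpow_sub₀ hpne]; field_simp
            simp only [hw]
            rw [show (1 + 2 * c) * (K * p ^ |i|) - c * (K * p ^ |i - 1|)
                - c * (K * p ^ |i + 1|)
                = K * ((1 + 2 * c) * p ^ |i| - c * (p ^ |i - 1| + p ^ |i + 1|)) by ring,
              key, hwi, hc]
            have h1p : (1 - p) ≠ 0 := by linarith
            field_simp
            ring
          rw [show (1 + 2 * c) * (w i * f (x + i)) - c * (w (i - 1) * f (x + i))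
              - c * (w (i + 1) * f (x + i))
              = ((1 + 2 * c) * w i - c * w (i - 1) - c * w (i + 1)) * f (x + i) by ring,
            hcoef, zero_mul]
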